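/- arXiv:math/0606418 — 3 statements merged into one kernel-verified Lean document; each statement's English description precedes it below -/
import Mathlib

section
/- Let q be a prime power, n ≥ 1, and L = 𝔽_{q^n} the finite field with q^n elements. Consider the action of the unit group Lˣ on L × Lˣ given by c • (g, Δ) = (c^{q-1}·g, c^{q²-1}·Δ). If n is odd, then the number of orbits of this action equals (q-1)·q^n. -/
/-- Auxiliary: if all stabilizers have the same `Nat.card`, orbit counting. -/
lemma drinfeld_aux_orbit_count {G X : Type*} [Group G] [Fintype G] [Fintype X]
    [MulAction G X] {k : ℕ}
    (h : ∀ x : X, Nat.card (MulAction.stabilizer G x) = k) :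
    Nat.card (MulAction.orbitRel.Quotient G X) * Fintype.card G = Fintype.card X * k := by
  classical
  have hX : Fintype.card X = ∑ ω : MulAction.orbitRel.Quotient G X,
      Fintype.card (MulAction.orbit G ω.out) := by
    rw [Fintype.card_congr (MulAction.selfEquivSigmaOrbits G X), Fintype.card_sigma]
  calc Nat.card (MulAction.orbitRel.Quotient G X) * Fintype.card G
      = ∑ _ω : MulAction.orbitRel.Quotient G X, Fintype.card G := by
        rw [Finset.sum_const, Nat.card_eq_fintype_card, smul_eq_mul, Finset.card_univ]
    _ = ∑ ω : MulAction.orbitRel.Quotient G X,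
          Fintype.card (MulAction.orbit G ω.out) * k := by
        refine Finset.sum_congr rfl fun ω _ => ?_
        rw [← MulAction.card_orbit_mul_card_stabilizer_eq_card_group G ω.out]
        congr 1
        rw [← h ω.out, Nat.card_eq_fintype_card]
    _ = (∑ ω : MulAction.orbitRel.Quotient G X,
          Fintype.card (MulAction.orbit G ω.out)) * k := by rw [Finset.sum_mul]
    _ = Fintype.card X * k := by rw [hX]

/-- A wrapper for `L × Lˣ` carrying the Drinfeld action (avoids instance clashes). -/
@[ext]
structure DrinfeldPt (L : Type*) [Field L] where
  g : L
  d : Lˣ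

/-- The obvious equivalence `L × Lˣ ≃ DrinfeldPt L`. -/
def drinfeldEquiv (L : Type*) [Field L] : L × Lˣ ≃ DrinfeldPt L where
  toFun x := ⟨x.1, x.2⟩
  invFun x := (x.g, x.d)
  left_inv x := rfl
  right_inv x := rfl

/-- Auxiliary: the Drinfeld action of `Lˣ` on `L × Lˣ`. -/
def drinfeldAction (q : ℕ) (L : Type*) [Field L] : MulAction Lˣ (DrinfeldPt L) where
  smul c x := ⟨(c : L) ^ (q - 1) * x.g, c ^ (q ^ 2 - 1) * x.d⟩
  one_smul x := by
    show (⟨((1 : Lˣ) : L) ^ (q - 1) * x.g, (1 : Lˣ) ^ (q ^ 2 - 1) * x.d⟩ : DrinfeldPt L) = x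
    ext <;> simp
  mul_smul c d x := by
    show (⟨((c * d : Lˣ) : L) ^ (q - 1) * x.g, (c * d) ^ (q ^ 2 - 1) * x.d⟩ : DrinfeldPt L)
      = ⟨(c : L) ^ (q - 1) * ((d : L) ^ (q - 1) * x.g),
         c ^ (q ^ 2 - 1) * (d ^ (q ^ 2 - 1) * x.d)⟩
    ext <;> simp [mul_pow, mul_assoc]

/-- Auxiliary: in `𝔽_{q^n}` with `n` odd, `(q²-1)`-th roots of unity are `(q-1)`-th
roots of unity. -/
lemma drinfeld_aux_pow (q n : ℕ) (hq : 1 ≤ q) (hodd : Odd n)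
    (L : Type*) [Field L] [Fintype L] (hL : Fintype.card L = q ^ n)
    (c : Lˣ) (hc : c ^ (q ^ 2 - 1) = 1) : c ^ (q - 1) = 1 := by
  obtain ⟨k, hk⟩ := hodd
  have hx2 : (c : L) ^ q ^ 2 = c := by
    have h1 : (c : L) ^ (q ^ 2 - 1) = 1 := by
      have := congrArg (Units.val) hc; simpa using this
    calc (c : L) ^ q ^ 2 = (c : L) ^ (q ^ 2 - 1 + 1) := by
          congr 1; have : 1 ≤ q ^ 2 := Nat.one_le_pow _ _ hq; omega
      _ = (c : L) ^ (q ^ 2 - 1) * c := by rw [pow_succ]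
      _ = c := by rw [h1, one_mul]
  have key : ∀ m : ℕ, (c : L) ^ (q ^ 2) ^ m = c := by
    intro m
    induction m with
    | zero => simp
    | succ m ih => rw [pow_succ, pow_mul, ih, hx2]
  have hq2 : (c : L) ^ q = c := by
    have h1 : (c : L) ^ q ^ n = c := by rw [← hL]; exact FiniteField.pow_card _
    have h2 : (c : L) ^ q ^ n = (c : L) ^ q := by
      rw [hk, pow_succ, pow_mul q, pow_mul, key]
    rw [← h2, h1]
  have hcq : c ^ q = c := Units.ext (by simpa using hq2)
  have hstep : c ^ (q - 1) * c = 1 * c := by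
    rw [one_mul, ← pow_succ]
    have h3 : q - 1 + 1 = q := by omega
    rw [h3, hcq]
  exact mul_right_cancel hstep

/-- Auxiliary: there are exactly `q - 1` roots of unity of order dividing `q-1`
in `𝔽_{q^n}`. -/
lemma drinfeld_aux_card_rootsOfUnity (q n : ℕ) (hq : 2 ≤ q) (hn : 1 ≤ n)
    (L : Type*) [Field L] [Fintype L] (hL : Fintype.card L = q ^ n) :
    Nat.card (rootsOfUnity (q - 1) L) = q - 1 := by
  classical
  have hN : Fintype.card Lˣ = q ^ n - 1 := by rw [Fintype.card_units, hL]
  obtain ⟨g, hg⟩ := IsCyclic.exists_ofOrder_eq_natCard (α := Lˣ)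
  rw [Nat.card_eq_fintype_card, hN] at hg
  have hd : q - 1 ∣ q ^ n - 1 := by simpa using Nat.sub_dvd_pow_sub_pow q 1 n
  have hN0 : q ^ n - 1 ≠ 0 := by
    have : 2 ≤ q ^ n := le_trans hq (Nat.le_self_pow (by omega) q)
    omega
  have horder : orderOf (g ^ ((q ^ n - 1) / (q - 1))) = q - 1 := by
    rw [orderOf_pow, hg, Nat.gcd_eq_right (Nat.div_dvd_of_dvd hd), Nat.div_div_self hd hN0]
  have hprim := IsPrimitiveRoot.orderOf (g ^ ((q ^ n - 1) / (q - 1)))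
  rw [horder] at hprim
  haveI : NeZero (q - 1) := ⟨by omega⟩
  rw [Nat.card_eq_fintype_card]
  rw [← Nat.card_eq_fintype_card]; exact hprim.card_rootsOfUnity'

/-- The number of L-isomorphism classes of rank-2 Drinfeld 𝔽_q[T]-modules over
L = 𝔽_{q^n}, i.e. the number of orbits of the action
`c • (g, Δ) = (c^(q-1) • g, c^(q²-1) • Δ)` of `Lˣ` on `L × Lˣ`,
equals `(q - 1) * q^n` when `n` is odd. -/
theorem drinfeld_rank_two_isoClasses_odd (q n : ℕ) (hq : IsPrimePow q) (hn : 1 ≤ n)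
    (hodd : Odd n) (L : Type*) [Field L] [Fintype L] (hL : Fintype.card L = q ^ n) :
    Nat.card (Quot (fun x y : L × Lˣ =>
      ∃ c : Lˣ, y.1 = (c : L) ^ (q - 1) * x.1 ∧ y.2 = c ^ (q ^ 2 - 1) * x.2)) =
      (q - 1) * q ^ n := by
  classical
  have hq2 : 2 ≤ q := hq.two_le
  letI act : MulAction Lˣ (DrinfeldPt L) := drinfeldAction q L
  letI : Fintype (DrinfeldPt L) := Fintype.ofEquiv _ (drinfeldEquiv L)
  have hsmul : ∀ (c : Lˣ) (x : DrinfeldPt L),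
      c • x = ⟨(c : L) ^ (q - 1) * x.g, c ^ (q ^ 2 - 1) * x.d⟩ := fun c x => rfl
  have key : ∀ x y : L × Lˣ,
      (∃ c : Lˣ, y.1 = (c : L) ^ (q - 1) * x.1 ∧ y.2 = c ^ (q ^ 2 - 1) * x.2) ↔
      (MulAction.orbitRel Lˣ (DrinfeldPt L)).r (drinfeldEquiv L x) (drinfeldEquiv L y) := by
    intro x y
    constructor
    · rintro ⟨c, h1, h2⟩
      have hcx : c • drinfeldEquiv L x = drinfeldEquiv L y := by
        rw [hsmul]
        exact DrinfeldPt.ext h1.symm h2.symm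
      exact Setoid.symm' _ (MulAction.mem_orbit_iff.mpr ⟨c, hcx⟩)
    · intro h
      obtain ⟨c, hc⟩ := MulAction.mem_orbit_iff.mp (Setoid.symm' _ h)
      rw [hsmul] at hc
      refine ⟨c, ?_, ?_⟩
      · exact (congrArg DrinfeldPt.g hc).symm
      · exact (congrArg DrinfeldPt.d hc).symm
  have e : Nat.card (Quot (fun x y : L × Lˣ =>
      ∃ c : Lˣ, y.1 = (c : L) ^ (q - 1) * x.1 ∧ y.2 = c ^ (q ^ 2 - 1) * x.2)) =
      Nat.card (MulAction.orbitRel.Quotient Lˣ (DrinfeldPt L)) :=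
    Nat.card_congr (Quot.congr (drinfeldEquiv L) key)
  have hstab : ∀ x : DrinfeldPt L, Nat.card (MulAction.stabilizer Lˣ x) = q - 1 := by
    intro x
    have hs : MulAction.stabilizer Lˣ x = rootsOfUnity (q - 1) L := by
      ext c
      rw [MulAction.mem_stabilizer_iff, mem_rootsOfUnity, hsmul]
      constructor
      · intro h
        have h2 : c ^ (q ^ 2 - 1) * x.d = x.d := congrArg DrinfeldPt.d h
        exact drinfeld_aux_pow q n (by omega) hodd L hL c (mul_eq_right.mp h2)
      · intro h
        have hfac : q ^ 2 - 1 = (q - 1) * (q + 1) := by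
          obtain ⟨m, rfl⟩ : ∃ m, q = m + 2 := ⟨q - 2, by omega⟩
          have e1 : (m + 2) ^ 2 = m * m + 4 * m + 4 := by ring
          have e2 : (m + 2 - 1) * (m + 2 + 1) = m * m + 4 * m + 3 := by
            have h4 : m + 2 - 1 = m + 1 := by omega
            rw [h4]; ring
          omega
        have hc2 : c ^ (q ^ 2 - 1) = 1 := by rw [hfac, pow_mul, h, one_pow]
        have hc1 : (c : L) ^ (q - 1) = 1 := by
          have := congrArg Units.val h; simpa using this
        exact DrinfeldPt.ext (by rw [hc1, one_mul]) (by rw [hc2, one_mul])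
    rw [hs]
    exact drinfeld_aux_card_rootsOfUnity q n hq2 hn L hL
  have hmain := drinfeld_aux_orbit_count (G := Lˣ) (X := DrinfeldPt L) hstab
  have hcardX : Fintype.card (DrinfeldPt L) = q ^ n * (q ^ n - 1) := by
    rw [← Fintype.card_congr (drinfeldEquiv L), Fintype.card_prod, Fintype.card_units, hL]
  have hcardG : Fintype.card Lˣ = q ^ n - 1 := by rw [Fintype.card_units, hL]
  rw [hcardX, hcardG] at hmain
  have hpos : 0 < q ^ n - 1 := by
    have : 2 ≤ q ^ n := le_trans hq2 (Nat.le_self_pow (by omega) q)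
    omega
  rw [e]
  refine Nat.eq_of_mul_eq_mul_right hpos ?_
  rw [hmain]; ring
end

section
/- Let q be a prime power, n ≥ 1, and L = 𝔽_{q^n} the finite field with q^n elements. Consider the action of the unit group Lˣ on L × Lˣ given by c • (g, Δ) = (c^{q-1}·g, c^{q²-1}·Δ). If n is even, then the number of orbits of this action equals q^{n+1} - q^n + q² - q. -/
lemma aux_card_quot_pow_range (L : Type*) [Field L] [Fintype L] (d : ℕ) (hd : 0 < d)
    (hdvd : d ∣ Nat.card Lˣ) :
    Nat.card (Lˣ ⧸ (powMonoidHom d : Lˣ →* Lˣ).range) = d := by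
  classical
  haveI : NeZero d := ⟨hd.ne'⟩
  have hker : (powMonoidHom d : Lˣ →* Lˣ).ker = rootsOfUnity d L := by
    ext x
    simp [MonoidHom.mem_ker, powMonoidHom_apply, mem_rootsOfUnity]
  obtain ⟨g, hg⟩ := IsCyclic.exists_generator (α := Lˣ)
  have hord : orderOf g = Nat.card Lˣ := orderOf_eq_card_of_forall_mem_zpowers hg
  have h1 : orderOf (g ^ (Nat.card Lˣ / d)) = d := by
    rw [orderOf_pow, hord, Nat.gcd_eq_right (Nat.div_dvd_of_dvd hdvd),
      Nat.div_div_self hdvd Nat.card_pos.ne']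
  have hprim := IsPrimitiveRoot.orderOf (g ^ (Nat.card Lˣ / d))
  rw [h1] at hprim
  have hcardker : Nat.card ((powMonoidHom d : Lˣ →* Lˣ).ker) = d := by
    rw [hker]
    exact hprim.card_rootsOfUnity'
  have e1 : Nat.card (Lˣ ⧸ (powMonoidHom d : Lˣ →* Lˣ).ker)
      = Nat.card ((powMonoidHom d : Lˣ →* Lˣ).range) :=
    Nat.card_congr (QuotientGroup.quotientKerEquivRange _).toEquiv
  have h2 := Subgroup.card_eq_card_quotient_mul_card_subgroup
    ((powMonoidHom d : Lˣ →* Lˣ).ker)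
  have h3 := Subgroup.card_eq_card_quotient_mul_card_subgroup
    ((powMonoidHom d : Lˣ →* Lˣ).range)
  rw [hcardker] at h2
  rw [h2, ← e1] at h3
  have hA : 0 < Nat.card (Lˣ ⧸ (powMonoidHom d : Lˣ →* Lˣ).ker) := Nat.card_pos
  have : Nat.card (Lˣ ⧸ (powMonoidHom d : Lˣ →* Lˣ).ker) * d
      = Nat.card (Lˣ ⧸ (powMonoidHom d : Lˣ →* Lˣ).ker)
        * Nat.card (Lˣ ⧸ (powMonoidHom d : Lˣ →* Lˣ).range) := by
    rw [h3]; ring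
  exact (Nat.eq_of_mul_eq_mul_left hA this).symm

private lemma cg1 {G : Type*} [CommGroup G] (a b d : G) : b * d⁻¹ = a * b * (a * d)⁻¹ := by
  rw [mul_inv, mul_mul_mul_comm, mul_inv_cancel, one_mul]

private lemma cg3 {G : Type*} [CommGroup G] {a b x y : G} (h : b * x⁻¹ = a * b * y⁻¹) :
    y = a * x := by
  have := congrArg (fun z => z * x * y * b⁻¹) h
  simpa [mul_assoc, mul_comm, mul_left_comm] using this

private lemma cg4 {G : Type*} [CommGroup G] {c d d' : G} (hc : c = d⁻¹ * d') : d' = c * d := by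
  rw [hc, mul_comm, ← mul_assoc, mul_inv_cancel, one_mul]

private lemma cg6 {G : Type*} [CommGroup G] (u c : G) : u⁻¹ * (c * u) = c := by
  rw [mul_comm c u, ← mul_assoc, inv_mul_cancel, one_mul]

/-- The number of L-isomorphism classes of rank-2 Drinfeld 𝔽_q[T]-modules over
L = 𝔽_{q^n}, i.e. the number of orbits of the action
`c • (g, Δ) = (c^(q-1) • g, c^(q²-1) • Δ)` of `Lˣ` on `L × Lˣ`,
equals `q^(n+1) - q^n + q² - q` when `n` is even. -/
theorem drinfeld_rank_two_isoClasses_even (q n : ℕ) (hq : IsPrimePow q) (hn : 1 ≤ n)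
    (heven : Even n) (L : Type*) [Field L] [Fintype L] (hL : Fintype.card L = q ^ n) :
    Nat.card (Quot (fun x y : L × Lˣ =>
      ∃ c : Lˣ, y.1 = (c : L) ^ (q - 1) * x.1 ∧ y.2 = c ^ (q ^ 2 - 1) * x.2)) =
      q ^ (n + 1) - q ^ n + q ^ 2 - q := by
  classical
  have hq2 : 2 ≤ q := hq.two_le
  set r := fun x y : L × Lˣ =>
      ∃ c : Lˣ, y.1 = (c : L) ^ (q - 1) * x.1 ∧ y.2 = c ^ (q ^ 2 - 1) * x.2 with hr
  have hcardU : Nat.card Lˣ = q ^ n - 1 := by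
    rw [Nat.card_eq_fintype_card, Fintype.card_units, hL]
  have hqq : (q - 1) * (q + 1) = q ^ 2 - 1 := by
    have h1 : 1 ≤ q := by omega
    have h2 : 1 ≤ q ^ 2 := Nat.one_le_pow _ _ (by omega)
    zify [h1, h2]; ring
  have hd1 : (q - 1) ∣ Nat.card Lˣ := by
    rw [hcardU]
    simpa using Nat.sub_dvd_pow_sub_pow q 1 n
  have hd2 : (q ^ 2 - 1) ∣ Nat.card Lˣ := by
    obtain ⟨m, hm⟩ := heven
    rw [hcardU, show n = 2 * m by omega, pow_mul]
    simpa using Nat.sub_dvd_pow_sub_pow (q ^ 2) 1 m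
  set H1 := (powMonoidHom (q - 1) : Lˣ →* Lˣ).range with hH1
  set H2 := (powMonoidHom (q ^ 2 - 1) : Lˣ →* Lˣ).range with hH2
  -- the complete invariant
  set f : L × Lˣ → (Lˣ ⧸ H2) ⊕ (Lˣ × (Lˣ ⧸ H1)) := fun x =>
    if h : x.1 = 0 then Sum.inl (QuotientGroup.mk x.2)
    else Sum.inr (Units.mk0 x.1 h ^ (q + 1) * x.2⁻¹, QuotientGroup.mk (Units.mk0 x.1 h))
    with hf
  have hpow : ∀ c : Lˣ, c ^ (q ^ 2 - 1) = (c ^ (q - 1)) ^ (q + 1) := by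
    intro c; rw [← pow_mul, hqq]
  have hresp : ∀ a b : L × Lˣ, r a b → f a = f b := by
    rintro ⟨g, Δ⟩ ⟨g', Δ'⟩ ⟨c, h1, h2⟩
    simp only at h1 h2
    by_cases hg : g = 0
    · have hg' : g' = 0 := by rw [h1, hg, mul_zero]
      simp only [hf, hg, hg', dif_pos]
      refine congrArg _ ((QuotientGroup.eq).2 (MonoidHom.mem_range.2 ⟨c, ?_⟩))
      rw [powMonoidHom_apply, h2, cg6]
    · have hg' : g' ≠ 0 := by
        rw [h1]
        exact mul_ne_zero (pow_ne_zero _ c.ne_zero) hg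
      simp only [hf, dif_neg hg, dif_neg hg']
      have hu : Units.mk0 g' hg' = c ^ (q - 1) * Units.mk0 g hg := by
        ext; simp [h1]
      refine congrArg _ (Prod.ext ?_ ?_)
      · show Units.mk0 g hg ^ (q + 1) * Δ⁻¹ = Units.mk0 g' hg' ^ (q + 1) * Δ'⁻¹
        rw [hu, h2, hpow c, mul_pow]
        exact cg1 _ _ _
      · show QuotientGroup.mk (Units.mk0 g hg) = QuotientGroup.mk (Units.mk0 g' hg')
        rw [hu]
        exact (QuotientGroup.eq).2 (MonoidHom.mem_range.2 ⟨c, by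
          rw [powMonoidHom_apply, cg6]⟩)
  set F : Quot r → (Lˣ ⧸ H2) ⊕ (Lˣ × (Lˣ ⧸ H1)) := Quot.lift f hresp with hF
  have hinj : Function.Injective F := by
    intro a b
    induction a using Quot.ind with | _ x =>
    induction b using Quot.ind with | _ y =>
    intro hxy
    apply Quot.sound
    obtain ⟨g, Δ⟩ := x
    obtain ⟨g', Δ'⟩ := y
    change f (g, Δ) = f (g', Δ') at hxy
    by_cases hg : g = 0 <;> by_cases hg' : g' = 0
    · simp only [hf, dif_pos hg, dif_pos hg', Sum.inl.injEq] at hxy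
      obtain ⟨c, hc⟩ := (QuotientGroup.eq).1 hxy
      simp only [powMonoidHom_apply] at hc
      exact ⟨c, by simp [hg, hg'], cg4 hc⟩
    · simp [hf, dif_pos hg, dif_neg hg'] at hxy
    · simp [hf, dif_neg hg, dif_pos hg'] at hxy
    · simp only [hf, dif_neg hg, dif_neg hg', Sum.inr.injEq, Prod.mk.injEq] at hxy
      obtain ⟨hj, hcls⟩ := hxy
      obtain ⟨c, hc⟩ := (QuotientGroup.eq).1 hcls
      simp only [powMonoidHom_apply] at hc
      have hu : Units.mk0 g' hg' = c ^ (q - 1) * Units.mk0 g hg := cg4 hc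
      refine ⟨c, ?_, ?_⟩
      · have := congrArg (Units.val) hu
        simpa using this
      · show Δ' = c ^ (q ^ 2 - 1) * Δ
        rw [hu, mul_pow] at hj
        rw [hpow]
        exact cg3 hj
  have hsurj : Function.Surjective F := by
    rintro (j | ⟨j, cls⟩)
    · obtain ⟨Δ, rfl⟩ := QuotientGroup.mk_surjective j
      exact ⟨Quot.mk r (0, Δ), by simp [hF, hf]⟩
    · obtain ⟨u, rfl⟩ := QuotientGroup.mk_surjective cls
      refine ⟨Quot.mk r ((u : L), u ^ (q + 1) * j⁻¹), ?_⟩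
      have hu0 : (u : L) ≠ 0 := u.ne_zero
      have humk : Units.mk0 (u : L) hu0 = u := Units.ext rfl
      change f _ = _
      simp only [hf, dif_neg hu0, humk]
      congr 1
      refine Prod.ext ?_ rfl
      simp [mul_inv]
  have hcardeq : Nat.card (Quot r)
      = Nat.card ((Lˣ ⧸ H2) ⊕ (Lˣ × (Lˣ ⧸ H1))) :=
    Nat.card_congr (Equiv.ofBijective F ⟨hinj, hsurj⟩)
  have c1 : Nat.card (Lˣ ⧸ H1) = q - 1 :=
    aux_card_quot_pow_range L (q - 1) (by omega) hd1
  have c2 : Nat.card (Lˣ ⧸ H2) = q ^ 2 - 1 := by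
    refine aux_card_quot_pow_range L (q ^ 2 - 1) ?_ hd2
    have : 2 ≤ q ^ 2 := by nlinarith
    omega
  rw [hcardeq, Nat.card_sum, Nat.card_prod, c1, c2, hcardU]
  -- arithmetic
  have h1 : 1 ≤ q := by omega
  have hn2 : 2 ≤ n := by
    obtain ⟨m, hm⟩ := heven; omega
  have hq2n : q ^ 2 ≤ q ^ n := Nat.pow_le_pow_right (by omega) hn2
  have hqn1 : 1 ≤ q ^ n := Nat.one_le_pow _ _ (by omega)
  have hle1 : q ^ n ≤ q ^ (n + 1) := Nat.pow_le_pow_right (by omega) (by omega)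
  have hle2 : q ≤ q ^ (n + 1) - q ^ n + q ^ 2 := by
    have : q ≤ q ^ 2 := by nlinarith
    omega
  have h12 : 1 ≤ q ^ 2 := by nlinarith
  have hpow1 : q ^ (n + 1) = q ^ n * q := pow_succ q n
  zify [h1, h12, hqn1, hle1, hle2]
  ring
end

section
/- Let q be a prime power, n ≥ 1, and L = 𝔽_{q^n}. Consider the action of Lˣ on L × Lˣ given by c • (g, Δ) = (c^{q-1}·g, c^{q²-1}·Δ). Every orbit containing a pair (g, Δ) with g ≠ 0 has exactly (q^n - 1)/(q - 1) elements, and the number of orbits contained in the set {(g, Δ) ∈ L × Lˣ : g ≠ 0} equals (q - 1)(q^n - 1). -/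
/-- For the action `c • (g, Δ) = (c^(q-1) • g, c^(q²-1) • Δ)` of `Lˣ` on `L × Lˣ`
(L = 𝔽_{q^n}): every orbit of a pair `(g, Δ)` with `g ≠ 0` has exactly
`(q^n - 1)/(q - 1)` elements, and the number of orbits contained in the
invariant set `{(g, Δ) : g ≠ 0}` equals `(q - 1) * (q^n - 1)`. -/
theorem drinfeld_rank_two_ordinary_orbits (q n : ℕ) (hq : IsPrimePow q) (hn : 1 ≤ n)
    (L : Type*) [Field L] [Fintype L] (hL : Fintype.card L = q ^ n) :
    (∀ x : L × Lˣ, x.1 ≠ 0 →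
      Nat.card {y : L × Lˣ //
          ∃ c : Lˣ, y.1 = (c : L) ^ (q - 1) * x.1 ∧ y.2 = c ^ (q ^ 2 - 1) * x.2} =
        (q ^ n - 1) / (q - 1)) ∧
    Nat.card (Quot (fun x y : {p : L × Lˣ // p.1 ≠ 0} =>
      ∃ c : Lˣ, (y : L × Lˣ).1 = (c : L) ^ (q - 1) * (x : L × Lˣ).1 ∧
        (y : L × Lˣ).2 = c ^ (q ^ 2 - 1) * (x : L × Lˣ).2)) =
      (q - 1) * (q ^ n - 1) := by
  classical
  have hq2 : 2 ≤ q := hq.two_le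
  have hdvd : (q - 1) ∣ (q ^ n - 1) := by
    simpa using Nat.sub_dvd_pow_sub_pow q 1 n
  have hqn : q ≤ q ^ n := Nat.le_self_pow (by omega) q
  have hNpos : 0 < q ^ n - 1 := by omega
  have cardU : Fintype.card Lˣ = q ^ n - 1 := by rw [Fintype.card_units, hL]
  -- the number of (q-1)-st roots of unity is q-1
  obtain ⟨ζ, hζ⟩ := IsCyclic.exists_generator (α := Lˣ)
  have hord : orderOf ζ = q ^ n - 1 := by
    rw [orderOf_eq_card_of_forall_mem_zpowers hζ, Nat.card_eq_fintype_card, cardU]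
  have hprim : IsPrimitiveRoot ζ (q ^ n - 1) := by
    rw [← hord]; exact IsPrimitiveRoot.orderOf ζ
  have hfac : q ^ n - 1 = ((q ^ n - 1) / (q - 1)) * (q - 1) :=
    (Nat.div_mul_cancel hdvd).symm
  have hprim' : IsPrimitiveRoot (ζ ^ ((q ^ n - 1) / (q - 1))) (q - 1) :=
    hprim.pow hNpos hfac
  haveI : NeZero (q - 1) := ⟨by omega⟩
  have hroots : Nat.card (rootsOfUnity (q - 1) L) = q - 1 := by
    exact hprim'.card_rootsOfUnity'
  -- the homomorphism whose range is (a translate of) each orbit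
  set φ : Lˣ →* Lˣ × Lˣ :=
    (powMonoidHom (q - 1)).prod (powMonoidHom (q ^ 2 - 1)) with hφ
  have hsq : q ^ 2 - 1 = (q - 1) * (q + 1) := by
    have := Nat.sq_sub_sq q 1
    simpa [mul_comm] using this
  have hker : φ.ker = rootsOfUnity (q - 1) L := by
    ext c
    simp only [MonoidHom.mem_ker, hφ, MonoidHom.prod_apply, powMonoidHom_apply,
      Prod.mk_eq_one, mem_rootsOfUnity]
    constructor
    · exact fun h => h.1
    · intro h
      exact ⟨h, by rw [hsq, pow_mul, h, one_pow]⟩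
  have hkercard : Nat.card φ.ker = q - 1 := by rw [hker]; exact hroots
  have hrange : Nat.card φ.range * (q - 1) = q ^ n - 1 := by
    have h1 : Nat.card Lˣ = Nat.card (Lˣ ⧸ φ.ker) * Nat.card φ.ker :=
      Subgroup.card_eq_card_quotient_mul_card_subgroup φ.ker
    have h2 : Nat.card (Lˣ ⧸ φ.ker) = Nat.card φ.range :=
      Nat.card_congr (QuotientGroup.quotientKerEquivRange φ).toEquiv
    rw [h2, hkercard] at h1
    rw [← h1, Nat.card_eq_fintype_card, cardU]
  have hrangecard : Nat.card φ.range = (q ^ n - 1) / (q - 1) :=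
    (Nat.div_eq_of_eq_mul_left (by omega) hrange.symm).symm
  -- Part 1: each orbit of a point with nonzero first coordinate
  have part1 : ∀ x : L × Lˣ, x.1 ≠ 0 →
      Nat.card {y : L × Lˣ //
          ∃ c : Lˣ, y.1 = (c : L) ^ (q - 1) * x.1 ∧ y.2 = c ^ (q ^ 2 - 1) * x.2} =
        (q ^ n - 1) / (q - 1) := by
    intro x hx
    set Ψ : Lˣ × Lˣ → L × Lˣ := fun p => ((p.1 : L) * x.1, p.2 * x.2) with hΨ
    have hinj : Function.Injective Ψ := by
      intro p p' h
      rw [Prod.ext_iff] at h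
      obtain ⟨h1, h2⟩ := h
      have e1 : p.1 = p'.1 := Units.ext (mul_right_cancel₀ hx h1)
      have e2 : p.2 = p'.2 := mul_right_cancel h2
      exact Prod.ext e1 e2
    have hset : {y : L × Lˣ |
        ∃ c : Lˣ, y.1 = (c : L) ^ (q - 1) * x.1 ∧ y.2 = c ^ (q ^ 2 - 1) * x.2} =
        Ψ '' (φ.range : Set (Lˣ × Lˣ)) := by
      ext y
      constructor
      · rintro ⟨c, h1, h2⟩
        refine ⟨φ c, ⟨c, rfl⟩, ?_⟩
        have : Ψ (φ c) = ((c : L) ^ (q - 1) * x.1, c ^ (q ^ 2 - 1) * x.2) := by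
          simp [hΨ, hφ, powMonoidHom_apply]
        rw [this, ← h1, ← h2]
      · rintro ⟨p, ⟨c, rfl⟩, rfl⟩
        exact ⟨c, by simp [hΨ, hφ, powMonoidHom_apply], by
          simp [hΨ, hφ, powMonoidHom_apply]⟩
    calc Nat.card {y : L × Lˣ //
          ∃ c : Lˣ, y.1 = (c : L) ^ (q - 1) * x.1 ∧ y.2 = c ^ (q ^ 2 - 1) * x.2}
        = Nat.card (Ψ '' (φ.range : Set (Lˣ × Lˣ))) :=
          Nat.card_congr (Equiv.setCongr hset)
      _ = Nat.card (φ.range : Set (Lˣ × Lˣ)) :=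
          Nat.card_image_of_injective hinj _
      _ = (q ^ n - 1) / (q - 1) := hrangecard
  refine ⟨part1, ?_⟩
  -- Part 2: counting the orbits
  set r : {p : L × Lˣ // p.1 ≠ 0} → {p : L × Lˣ // p.1 ≠ 0} → Prop :=
    fun x y => ∃ c : Lˣ, (y : L × Lˣ).1 = (c : L) ^ (q - 1) * (x : L × Lˣ).1 ∧
        (y : L × Lˣ).2 = c ^ (q ^ 2 - 1) * (x : L × Lˣ).2 with hr
  have hequiv : Equivalence r := by
    constructor
    · intro x; exact ⟨1, by simp, by simp⟩
    · rintro x y ⟨c, h1, h2⟩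
      refine ⟨c⁻¹, ?_, ?_⟩
      · rw [h1]
        simp [inv_pow, inv_mul_cancel_left₀ (pow_ne_zero _ (Units.ne_zero c))]
      · rw [h2]; simp [inv_pow]
    · rintro x y z ⟨c, h1, h2⟩ ⟨c', h1', h2'⟩
      refine ⟨c' * c, ?_, ?_⟩
      · rw [h1', h1]; push_cast; ring
      · rw [h2', h2, mul_pow, mul_assoc]
  have fiber_card : ∀ o : Quot r,
      Nat.card {x : {p : L × Lˣ // p.1 ≠ 0} // Quot.mk r x = o} =
        (q ^ n - 1) / (q - 1) := by
    intro o
    obtain ⟨x₀, rfl⟩ := Quot.exists_rep o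
    have key : ∀ x : {p : L × Lˣ // p.1 ≠ 0},
        Quot.mk r x = Quot.mk r x₀ ↔ r x₀ x := by
      intro x
      constructor
      · intro h
        exact hequiv.symm (hequiv.eqvGen_iff.mp (Quot.eqvGen_exact h))
      · intro h
        exact Quot.eqvGen_sound (Relation.EqvGen.rel _ _ (hequiv.symm h))
    have e : {x : {p : L × Lˣ // p.1 ≠ 0} // Quot.mk r x = Quot.mk r x₀} ≃
        {y : L × Lˣ // ∃ c : Lˣ, y.1 = (c : L) ^ (q - 1) * (x₀ : L × Lˣ).1 ∧
          y.2 = c ^ (q ^ 2 - 1) * (x₀ : L × Lˣ).2} := by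
      refine ⟨fun x => ⟨x.1.1, (key x.1).mp x.2⟩, fun y => ⟨⟨y.1, ?_⟩, ?_⟩, ?_, ?_⟩
      · obtain ⟨c, h1, _⟩ := y.2
        rw [h1]
        exact mul_ne_zero (pow_ne_zero _ (Units.ne_zero c)) x₀.2
      · exact (key _).mpr y.2
      · intro x; rfl
      · intro y; rfl
    rw [Nat.card_congr e]
    exact part1 _ x₀.2
  -- total count
  haveI : Fintype {p : L × Lˣ // p.1 ≠ 0} := Fintype.ofFinite _
  haveI : Fintype (Quot r) := Fintype.ofFinite _
  have cardP : Nat.card {p : L × Lˣ // p.1 ≠ 0} = (q ^ n - 1) * (q ^ n - 1) := by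
    have e : {p : L × Lˣ // p.1 ≠ 0} ≃ {g : L // g ≠ 0} × Lˣ :=
      Equiv.prodSubtypeFstEquivSubtypeProd (α := L) (β := Lˣ) (p := fun g => g ≠ 0)
    rw [Nat.card_congr e, Nat.card_prod,
      Nat.card_congr (unitsEquivNeZero (G₀ := L)).symm, Nat.card_eq_fintype_card,
      cardU]
  have hsum : Nat.card {p : L × Lˣ // p.1 ≠ 0} =
      Nat.card (Quot r) * ((q ^ n - 1) / (q - 1)) := by
    rw [Nat.card_congr (Equiv.sigmaFiberEquiv (Quot.mk r)).symm]
    rw [Nat.card_eq_fintype_card, Fintype.card_sigma]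
    rw [Nat.card_eq_fintype_card]
    calc (∑ o : Quot r, Fintype.card {x // Quot.mk r x = o})
        = ∑ _o : Quot r, (q ^ n - 1) / (q - 1) := by
          refine Finset.sum_congr rfl fun o _ => ?_
          rw [← Nat.card_eq_fintype_card, fiber_card o]
      _ = Fintype.card (Quot r) * ((q ^ n - 1) / (q - 1)) := by
          rw [Finset.sum_const, smul_eq_mul, Finset.card_univ]
  have hkpos : 0 < (q ^ n - 1) / (q - 1) :=
    Nat.div_pos (by omega) (by omega)
  have : Nat.card (Quot r) * ((q ^ n - 1) / (q - 1)) =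
      ((q - 1) * (q ^ n - 1)) * ((q ^ n - 1) / (q - 1)) := by
    rw [← hsum, cardP, mul_right_comm, Nat.mul_div_cancel' hdvd]
  exact Nat.eq_of_mul_eq_mul_right hkpos this
end
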